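/- arXiv:1302.2389 — 5 statements merged into one kernel-verified Lean document; each statement's English description precedes it below -/
import Mathlib

section
/- Let $D$ be a nonempty bounded open subset of $\mathbb{R}^3$, and let $p, p' \in \mathbb{R}^3 \setminus \overline{D}$ be such that the segment $[p,p'] = \{sp + (1-s)p' : 0 \le s \le 1\}$ satisfies $[p,p'] \cap \overline{D} = \emptyset$. Then $\inf_{x \in D} \left(1 + \frac{(p-x)\cdot(p'-x)}{|p-x|\,|p'-x|}\right) > 0$. -/
open RealInnerProductSpace

/-!
The quantity `1 + ⟪p - x, p' - x⟫ / (‖p - x‖ * ‖p' - x‖)` is `1 + cos ∠ p x p'`, which vanishes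
exactly when `∠ p x p' = π`, i.e. when `x` lies strictly between `p` and `p'`. Off the segment it is
therefore positive and continuous, so on the compact set `closure D` it is bounded below by a
positive constant.
-/

section

open InnerProductGeometry Real

variable {V : Type*} [NormedAddCommGroup V] [InnerProductSpace ℝ V]

theorem one_add_inner_div_norm_mul_norm_pos_of_notMem_segment {p p' x : V}
    (hx : x ∉ segment ℝ p p') : 0 < 1 + ⟪p - x, p' - x⟫ / (‖p - x‖ * ‖p' - x‖) := by
  rw [← cos_angle]
  have hpi : angle (p - x) (p' - x) ≠ π := fun h => hx <|
    (EuclideanGeometry.angle_eq_pi_iff_sbtw (p₁ := p) (p₂ := x) (p₃ := p')).1 h |>.wbtw.mem_segment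
  have hlt : cos π < cos (angle (p - x) (p' - x)) :=
    cos_lt_cos_of_nonneg_of_le_pi (angle_nonneg _ _) le_rfl ((angle_le_pi _ _).lt_of_ne hpi)
  rw [cos_pi] at hlt
  linarith

theorem continuousOn_one_add_inner_div_norm_mul_norm {p p' : V} {s : Set V}
    (hp : p ∉ s) (hp' : p' ∉ s) :
    ContinuousOn (fun x => 1 + ⟪p - x, p' - x⟫ / (‖p - x‖ * ‖p' - x‖)) s := by
  refine continuousOn_const.add (ContinuousOn.div (by fun_prop) (by fun_prop) fun x hx => ?_)
  exact mul_ne_zero (norm_ne_zero_iff.2 (sub_ne_zero.2 fun h => hp (h ▸ hx)))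
    (norm_ne_zero_iff.2 (sub_ne_zero.2 fun h => hp' (h ▸ hx)))

end

theorem stmt0_general (D : Set (EuclideanSpace ℝ (Fin 3))) (p p' : EuclideanSpace ℝ (Fin 3))
    (hDb : Bornology.IsBounded D)
    (hseg : segment ℝ p p' ∩ closure D = ∅) :
    ∃ ε > 0, ∀ x ∈ D,
      ε ≤ 1 + (inner ℝ (p - x) (p' - x) : ℝ) / (‖p - x‖ * ‖p' - x‖) := by
  have hoff : ∀ x ∈ closure D, x ∉ segment ℝ p p' := fun x hx hxs =>
    hseg.subset ⟨hxs, hx⟩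
  obtain ⟨ε, hε, hbound⟩ := hDb.isCompact_closure.exists_forall_le'
    (continuousOn_one_add_inner_div_norm_mul_norm
      (fun hp => hoff p hp (left_mem_segment ℝ p p'))
      (fun hp' => hoff p' hp' (right_mem_segment ℝ p p')))
    fun x hx => one_add_inner_div_norm_mul_norm_pos_of_notMem_segment (hoff x hx)
  exact ⟨ε, hε, fun x hx => hbound x (subset_closure hx)⟩

/-- If `D` is a nonempty bounded open subset of `ℝ³` and `p, p'` lie outside `closure D`
with the segment `[p,p']` disjoint from `closure D`, then
`inf_{x ∈ D} (1 + ⟪p-x, p'-x⟫ / (‖p-x‖ ‖p'-x‖)) > 0`. -/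
theorem stmt0 (D : Set (EuclideanSpace ℝ (Fin 3))) (p p' : EuclideanSpace ℝ (Fin 3))
    (hD : D.Nonempty) (hDo : IsOpen D) (hDb : Bornology.IsBounded D)
    (hp : p ∉ closure D) (hp' : p' ∉ closure D)
    (hseg : segment ℝ p p' ∩ closure D = ∅) :
    ∃ ε > 0, ∀ x ∈ D,
      ε ≤ 1 + (inner ℝ (p - x) (p' - x) : ℝ) / (‖p - x‖ * ‖p' - x‖) :=
  stmt0_general D p p' hDb hseg
end

section
/- Let $D \subset \mathbb{R}^3$ be a nonempty bounded open set, $p, p' \in \mathbb{R}^3 \setminus \overline{D}$, and let $c = \min_{x \in \partial D}(|p-x| + |x-p'|)$. Fix $s > 0$, let $\omega \in S^2$, and set $s(\omega) = \frac{c^2 - |p-p'|^2}{2(c - \omega\cdot(p-p'))}$, assuming $c > |p-p'|$ and $s < s(\omega)$. If the point $p' + s(\omega)\omega$ belongs to $\partial D$, then $\min_{x \in \partial D}(|p-x| + |x - (p'+s\omega)|) = c - s$. -/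
/-!
The point `q = p' + s(ω) ω` is where the ray from `p'` in direction `ω` meets the spheroid
`|p - x| + |x - p'| = c`; the formula for `s(ω)` is exactly the solution of
`|p - p' - t ω| = c - t`. Since `q ∈ ∂D` and `q' = p' + s ω` lies on the segment `[p', q]`,
`|p - q| + |q - q'| = (c - s(ω)) + (s(ω) - s) = c - s`. Conversely every `x ∈ ∂D` satisfies
`c ≤ |p - x| + |x - p'| ≤ |p - x| + |x - q'| + s` by the triangle inequality.
-/

open RealInnerProductSpace

section Spheroid

variable {E : Type*} [NormedAddCommGroup E] [InnerProductSpace ℝ E]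

/-- The paper's `s(ω)`, written with `v = p - p'`. -/
noncomputable def spheroidRayParam (v ω : E) (c : ℝ) : ℝ :=
  (c ^ 2 - ‖v‖ ^ 2) / (2 * (c - ⟪ω, v⟫))

variable {v ω : E} {c : ℝ}

lemma inner_lt_of_norm_lt (hω : ‖ω‖ = 1) (hc : ‖v‖ < c) : ⟪ω, v⟫ < c := by
  have := real_inner_le_norm ω v
  rw [hω, one_mul] at this
  linarith

lemma spheroidRayParam_mul (hω : ‖ω‖ = 1) (hc : ‖v‖ < c) :
    spheroidRayParam v ω c * (2 * (c - ⟪ω, v⟫)) = c ^ 2 - ‖v‖ ^ 2 :=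
  div_mul_cancel₀ _ (by linarith [inner_lt_of_norm_lt hω hc])

lemma spheroidRayParam_le (hω : ‖ω‖ = 1) (hc : ‖v‖ < c) : spheroidRayParam v ω c ≤ c := by
  have hsq : ⟪ω, v⟫ ^ 2 ≤ ‖v‖ ^ 2 := by
    apply sq_le_sq.mpr
    simpa [hω] using abs_real_inner_le_norm ω v
  rw [spheroidRayParam, div_le_iff₀ (by linarith [inner_lt_of_norm_lt hω hc])]
  nlinarith [sq_nonneg (c - ⟪ω, v⟫)]

lemma norm_sub_smul_eq_sub_of_mul_eq {t : ℝ} (hω : ‖ω‖ = 1) (ht : t ≤ c)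
    (h : t * (2 * (c - ⟪ω, v⟫)) = c ^ 2 - ‖v‖ ^ 2) : ‖v - t • ω‖ = c - t := by
  have hsq : ‖v - t • ω‖ ^ 2 = (c - t) ^ 2 := by
    rw [norm_sub_sq_real, real_inner_smul_right, norm_smul, Real.norm_eq_abs, mul_pow, sq_abs,
      hω, real_inner_comm]
    linarith
  exact (sq_eq_sq₀ (norm_nonneg _) (by linarith)).mp hsq

lemma norm_sub_spheroidRayParam_smul (hω : ‖ω‖ = 1) (hc : ‖v‖ < c) :
    ‖v - spheroidRayParam v ω c • ω‖ = c - spheroidRayParam v ω c :=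
  norm_sub_smul_eq_sub_of_mul_eq hω (spheroidRayParam_le hω hc) (spheroidRayParam_mul hω hc)

end Spheroid

section Ray

variable {E : Type*} [NormedAddCommGroup E] [NormedSpace ℝ E] {x p ω : E} {s t : ℝ}

lemma norm_add_smul_sub_add_smul (hω : ‖ω‖ = 1) (hst : s ≤ t) :
    ‖p + t • ω - (p + s • ω)‖ = t - s := by
  rw [add_sub_add_left_eq_sub, ← sub_smul, norm_smul, hω, mul_one, Real.norm_of_nonneg]
  linarith

lemma norm_sub_le_norm_sub_add_smul_add (hω : ‖ω‖ = 1)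
    (hs : 0 ≤ s) : ‖x - p‖ ≤ ‖x - (p + s • ω)‖ + s := by
  calc ‖x - p‖ = ‖(x - (p + s • ω)) + s • ω‖ := by congr 1; abel
    _ ≤ ‖x - (p + s • ω)‖ + ‖s • ω‖ := norm_add_le _ _
    _ = ‖x - (p + s • ω)‖ + s := by rw [norm_smul, hω, mul_one, Real.norm_of_nonneg hs]

end Ray

theorem stmt7_general (D : Set (EuclideanSpace ℝ (Fin 3))) (p p' ω : EuclideanSpace ℝ (Fin 3))
    (c s : ℝ)
    (hc : IsLeast {r : ℝ | ∃ x ∈ frontier D, r = ‖p - x‖ + ‖x - p'‖} c)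
    (hcpp' : ‖p - p'‖ < c) (hω : ‖ω‖ = 1)
    (hs : 0 < s) (hss : s < (c ^ 2 - ‖p - p'‖ ^ 2) / (2 * (c - (inner ℝ (ω) (p - p') : ℝ))))
    (hq : p' + ((c ^ 2 - ‖p - p'‖ ^ 2) / (2 * (c - (inner ℝ (ω) (p - p') : ℝ)))) • ω ∈ frontier D) :
    IsLeast {r : ℝ | ∃ x ∈ frontier D, r = ‖p - x‖ + ‖x - (p' + s • ω)‖} (c - s) := by
  change s < spheroidRayParam (p - p') ω c at hss
  change p' + spheroidRayParam (p - p') ω c • ω ∈ frontier D at hq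
  set t := spheroidRayParam (p - p') ω c
  constructor
  · refine ⟨p' + t • ω, hq, ?_⟩
    have hpq : ‖p - (p' + t • ω)‖ = c - t := by
      rw [← sub_sub]; exact norm_sub_spheroidRayParam_smul hω hcpp'
    rw [hpq, norm_add_smul_sub_add_smul hω hss.le]
    ring
  · rintro _ ⟨x, hx, rfl⟩
    have hcx : c ≤ ‖p - x‖ + ‖x - p'‖ := hc.2 ⟨x, hx, rfl⟩
    linarith [norm_sub_le_norm_sub_add_smul_add (x := x) (p := p') hω hs.le]

/-- If `c` is the minimum of `‖p-x‖+‖x-p'‖` over `∂D`, `c > ‖p-p'‖`, `ω` is a unit vector,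
`0 < s < s(ω)` where `s(ω) = (c²-‖p-p'‖²)/(2(c-ω·(p-p')))`, and `p' + s(ω)ω ∈ ∂D`, then
the minimum of `‖p-x‖+‖x-(p'+sω)‖` over `∂D` equals `c - s`. -/
theorem stmt7 (D : Set (EuclideanSpace ℝ (Fin 3))) (p p' ω : EuclideanSpace ℝ (Fin 3))
    (c s : ℝ)
    (hD : D.Nonempty) (hDo : IsOpen D) (hDb : Bornology.IsBounded D)
    (hp : p ∉ closure D) (hp' : p' ∉ closure D)
    (hc : IsLeast {r : ℝ | ∃ x ∈ frontier D, r = ‖p - x‖ + ‖x - p'‖} c)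
    (hcpp' : ‖p - p'‖ < c) (hω : ‖ω‖ = 1)
    (hs : 0 < s) (hss : s < (c ^ 2 - ‖p - p'‖ ^ 2) / (2 * (c - (inner ℝ (ω) (p - p') : ℝ))))
    (hq : p' + ((c ^ 2 - ‖p - p'‖ ^ 2) / (2 * (c - (inner ℝ (ω) (p - p') : ℝ)))) • ω ∈ frontier D) :
    IsLeast {r : ℝ | ∃ x ∈ frontier D, r = ‖p - x‖ + ‖x - (p' + s • ω)‖} (c - s) :=
  stmt7_general D p p' ω c s hc hcpp' hω hs hss hq
end

section
/- Let $D \subset \mathbb{R}^3$ be a nonempty bounded open set, $p, p' \in \mathbb{R}^3 \setminus \overline{D}$ with $c = \min_{x \in \partial D}(|p-x| + |x-p'|) > |p-p'|$. Fix $s > 0$ with $s < \inf_{\omega \in S^2} s(\omega)$ where $s(\omega) = \frac{c^2 - |p-p'|^2}{2(c - \omega\cdot(p-p'))}$. Let $\omega \in S^2$. If $\min_{x \in \partial D}(|p-x| + |x - (p'+s\omega)|) = c - s$, then $p' + s(\omega)\omega \in \partial D$. -/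
/-!
A point `x ∈ ∂D` realising the minimum `c - s` satisfies
`c ≤ ‖p - x‖ + ‖x - p'‖ ≤ ‖p - x‖ + ‖x - (p' + s ω)‖ + s = c`, so the triangle inequality
`‖x - p'‖ ≤ ‖x - (p' + s ω)‖ + s` is an equality. Hence `p' + s ω` lies between `p'` and `x`,
i.e. `x = p' + r ω` with `r = ‖x - p'‖`, and `x` lies on the ellipsoid `‖p - y‖ + ‖y - p'‖ = c`.
Squaring `‖p - p' - r ω‖ = c - r` gives `r = s(ω)`.
-/

open RealInnerProductSpace

section Ray

variable {E : Type*} [NormedAddCommGroup E] [NormedSpace ℝ E]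

theorem eq_add_norm_sub_smul_of_wbtw {p x ω : E} {s : ℝ} (hω : ‖ω‖ = 1) (hs : 0 < s)
    (h : Wbtw ℝ p (p + s • ω) x) : x = p + ‖x - p‖ • ω := by
  have hray : SameRay ℝ (s • ω) (x - p) := by
    simpa only [vsub_eq_sub, add_sub_cancel_left] using h.sameRay_vsub_left
  have hray' : SameRay ℝ ω (x - p) := by
    simpa only [smul_smul, inv_mul_cancel₀ hs.ne', one_smul] using
      hray.pos_smul_left (inv_pos.2 hs)
  rw [← hray'.norm_smul_eq, hω, one_smul, add_sub_cancel]

end Ray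

section Ellipsoid

variable {F : Type*} [NormedAddCommGroup F] [InnerProductSpace ℝ F]

/-- The distance `s(ω)` from the focus `p'`, in the direction `ω`, to the ellipsoid
`{y | ‖p - y‖ + ‖y - p'‖ = c}`. -/
noncomputable def focalRadius (c : ℝ) (p p' ω : F) : ℝ :=
  (c ^ 2 - ‖p - p'‖ ^ 2) / (2 * (c - ⟪ω, p - p'⟫))

theorem eq_focalRadius_of_norm_sub_add_eq {c r : ℝ} {p p' ω : F} (hω : ‖ω‖ = 1)
    (hc : ⟪ω, p - p'⟫ < c) (h : ‖p - (p' + r • ω)‖ + r = c) :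
    r = focalRadius c p p' ω := by
  have hsq : ‖(p - p') - r • ω‖ ^ 2 = (c - r) ^ 2 := by
    rw [sub_sub, ← h, add_sub_cancel_right]
  rw [norm_sub_sq_real, real_inner_smul_right, real_inner_comm, norm_smul, hω, mul_one,
    Real.norm_eq_abs, sq_abs] at hsq
  rw [focalRadius, eq_div_iff (by linarith)]
  linarith

end Ellipsoid

theorem stmt8_general (D : Set (EuclideanSpace ℝ (Fin 3))) (p p' ω : EuclideanSpace ℝ (Fin 3))
    (c s : ℝ)
    (hc : IsLeast {r : ℝ | ∃ x ∈ frontier D, r = ‖p - x‖ + ‖x - p'‖} c)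
    (hcpp' : ‖p - p'‖ < c) (hω : ‖ω‖ = 1) (hs : 0 < s)
    (hmin : IsLeast {r : ℝ | ∃ x ∈ frontier D, r = ‖p - x‖ + ‖x - (p' + s • ω)‖} (c - s)) :
    p' + ((c ^ 2 - ‖p - p'‖ ^ 2) / (2 * (c - (inner ℝ (ω) (p - p') : ℝ)))) • ω ∈ frontier D := by
  obtain ⟨x, hx, hxc⟩ := hmin.1
  have hcx : c ≤ ‖p - x‖ + ‖x - p'‖ := hc.2 ⟨x, hx, rfl⟩
  have hsω : ‖(p' + s • ω) - p'‖ = s := by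
    rw [add_sub_cancel_left, norm_smul, hω, mul_one, Real.norm_eq_abs, abs_of_pos hs]
  have hsplit : ‖x - (p' + s • ω)‖ + s = ‖x - p'‖ := by
    refine le_antisymm (by linarith) ?_
    simpa only [hsω] using norm_sub_le_norm_sub_add_norm_sub x (p' + s • ω) p'
  have hbtw : Wbtw ℝ p' (p' + s • ω) x := by
    refine dist_add_dist_eq_iff.1 ?_
    rw [dist_comm p' (p' + s • ω), dist_comm (p' + s • ω) x, dist_comm p' x, dist_eq_norm,
      dist_eq_norm, dist_eq_norm, hsω, ← hsplit, add_comm]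
  have hx_ray := eq_add_norm_sub_smul_of_wbtw hω hs hbtw
  have hinner : ⟪ω, p - p'⟫ < c :=
    (real_inner_le_norm ω (p - p')).trans_lt (by rwa [hω, one_mul])
  have hr : ‖x - p'‖ = focalRadius c p p' ω :=
    eq_focalRadius_of_norm_sub_add_eq hω hinner (by rw [← hx_ray]; linarith)
  change p' + focalRadius c p p' ω • ω ∈ frontier D
  rwa [← hr, ← hx_ray]

/-- Converse: if the minimum of `‖p-x‖+‖x-(p'+sω)‖` over `∂D` equals `c - s`, with
`0 < s < s(ω')` for every unit vector `ω'`, then `p' + s(ω)ω ∈ ∂D`. -/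
theorem stmt8 (D : Set (EuclideanSpace ℝ (Fin 3))) (p p' ω : EuclideanSpace ℝ (Fin 3))
    (c s : ℝ)
    (hD : D.Nonempty) (hDo : IsOpen D) (hDb : Bornology.IsBounded D)
    (hp : p ∉ closure D) (hp' : p' ∉ closure D)
    (hc : IsLeast {r : ℝ | ∃ x ∈ frontier D, r = ‖p - x‖ + ‖x - p'‖} c)
    (hcpp' : ‖p - p'‖ < c) (hω : ‖ω‖ = 1) (hs : 0 < s)
    (hss : ∀ ω' : EuclideanSpace ℝ (Fin 3), ‖ω'‖ = 1 →
      s < (c ^ 2 - ‖p - p'‖ ^ 2) / (2 * (c - (inner ℝ (ω') (p - p') : ℝ))))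
    (hmin : IsLeast {r : ℝ | ∃ x ∈ frontier D, r = ‖p - x‖ + ‖x - (p' + s • ω)‖} (c - s)) :
    p' + ((c ^ 2 - ‖p - p'‖ ^ 2) / (2 * (c - (inner ℝ (ω) (p - p') : ℝ)))) • ω ∈ frontier D :=
  stmt8_general D p p' ω c s hc hcpp' hω hs hmin
end

section
/- Let $D \subset \mathbb{R}^3$ be a nonempty bounded open convex set, and let $p, p' \in \mathbb{R}^3 \setminus \overline{D}$ with $[p,p'] \cap \overline{D} = \emptyset$. Then the first reflector $\Lambda_{\partial D}(p,p') = \{q \in \partial D : |p-q|+|q-p'| = \min_{x \in \partial D}(|p-x|+|x-p'|)\}$ consists of exactly one point. -/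
/-!
By strict convexity of the norm, the function `f x = ‖p - x‖ + ‖x - p'‖` is strictly smaller at the
midpoint of two distinct points `q, q'` with `f q = f q'` than at `q`, unless `q'` lies on `[p, p']`.
If two distinct boundary points `q, q'` both attained
the minimum `c`, their midpoint `m` would lie in the convex set `closure D` with value `< c`;
walking from the outside point `p` to `m` one crosses `∂D` at a point `w`, and
`‖p - w‖ + ‖w - p'‖ ≤ ‖p - m‖ + ‖m - p'‖ < c` contradicts minimality.
-/

open Set

theorem IsPreconnected.inter_frontier_nonempty {X : Type*} [TopologicalSpace X] {s t : Set X}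
    (hs : IsPreconnected s) (hst : (s ∩ t).Nonempty) (hst' : (s \ t).Nonempty) :
    (s ∩ frontier t).Nonempty := by
  by_contra h
  rw [not_nonempty_iff_eq_empty] at h
  have hcover : s ⊆ interior t ∪ (closure t)ᶜ := fun x hx => by
    by_cases hi : x ∈ interior t
    · exact Or.inl hi
    · exact Or.inr fun hc => h.subset ⟨hx, hc, hi⟩
  obtain ⟨x, hxs, hxt⟩ := hst
  obtain ⟨y, hys, hyt⟩ := hst'
  have hx : x ∈ interior t :=
    (hcover hxs).resolve_right fun hc => hc (subset_closure hxt)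
  have hy : y ∈ (closure t)ᶜ := (hcover hys).resolve_left fun hi => hyt (interior_subset hi)
  obtain ⟨z, -, hzi, hzc⟩ :=
    hs _ _ isOpen_interior isClosed_closure.isOpen_compl hcover ⟨x, hxs, hx⟩ ⟨y, hys, hy⟩
  exact hzc (interior_subset_closure hzi)

section FocalSum

variable {E : Type*} [NormedAddCommGroup E]

def focalSum (p p' x : E) : ℝ := ‖p - x‖ + ‖x - p'‖

theorem continuous_focalSum (p p' : E) : Continuous (focalSum p p') := by
  unfold focalSum
  fun_prop

variable [NormedSpace ℝ E]

theorem focalSum_le_of_mem_segment {p p' w m : E} (hw : w ∈ segment ℝ p m) :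
    focalSum p p' w ≤ focalSum p p' m := by
  have hsplit : ‖p - w‖ + ‖w - m‖ = ‖p - m‖ := by
    simpa only [dist_eq_norm] using dist_add_dist_of_mem_segment hw
  have htri : ‖w - p'‖ ≤ ‖w - m‖ + ‖m - p'‖ := norm_sub_le_norm_sub_add_norm_sub w m p'
  unfold focalSum
  linarith

theorem norm_midpoint_eq_half_norm_add (x y : E) : ‖midpoint ℝ x y‖ = ‖x + y‖ / 2 := by
  rw [midpoint_eq_smul_add, invOf_eq_inv, norm_smul, norm_inv, Real.norm_two]
  ring

/-- The equality case at a midpoint: with `u = p - q'`, `v = q' - p'`, `δ = q' - q` the conclusion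
puts `q'` on `[p, p']`. -/
theorem sameRay_of_sameRay_add_of_sameRay_sub {u v δ : E} (hu : u ≠ 0) (hv : v ≠ 0) (hδ : δ ≠ 0)
    (hu' : SameRay ℝ u (u + δ)) (hv' : SameRay ℝ v (v - δ))
    (hnorm : ‖u + δ‖ + ‖v - δ‖ = ‖u‖ + ‖v‖) : SameRay ℝ u v := by
  obtain ⟨a, ha, hau⟩ := hu'.exists_nonneg_left hu
  obtain ⟨b, hb, hbv⟩ := hv'.exists_nonneg_left hv
  have hδu : δ = (a - 1) • u := by rw [sub_smul, one_smul, hau]; abel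
  have hδv : δ = (1 - b) • v := by rw [sub_smul, one_smul, hbv]; abel
  have hcoef : (a - 1) * ‖u‖ = (1 - b) * ‖v‖ := by
    rw [← hau, ← hbv, norm_smul, norm_smul, Real.norm_of_nonneg ha, Real.norm_of_nonneg hb]
      at hnorm
    linarith
  have hb1 : 1 - b ≠ 0 := fun h => hδ (by rw [hδv, h, zero_smul])
  have hvu : v = (‖v‖ / ‖u‖) • u := by
    have hratio : ‖v‖ / ‖u‖ = (1 - b)⁻¹ * (a - 1) := by
      field_simp [norm_ne_zero_iff.2 hu]
      linarith
    rw [hratio, mul_smul, ← hδu, hδv, inv_smul_smul₀ hb1]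
  rw [hvu]
  exact SameRay.sameRay_nonneg_smul_right u (by positivity)

variable [StrictConvexSpace ℝ E]

theorem focalSum_midpoint_lt {p p' q q' : E} (hne : q ≠ q')
    (heq : focalSum p p' q = focalSum p p' q') (hq' : q' ∉ segment ℝ p p') :
    focalSum p p' (midpoint ℝ q q') < focalSum p p' q := by
  have hp : p - midpoint ℝ q q' = midpoint ℝ (p - q) (p - q') := by
    simpa using midpoint_vsub_midpoint (R := ℝ) p p q q'
  have hp' : midpoint ℝ q q' - p' = midpoint ℝ (q - p') (q' - p') := by
    simpa using midpoint_vsub_midpoint (R := ℝ) q q' p' p'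
  have hray : ¬(SameRay ℝ (p - q) (p - q') ∧ SameRay ℝ (q - p') (q' - p')) := by
    rintro ⟨h₁, h₂⟩
    refine hq' (mem_segment_iff_sameRay.2 ?_)
    have hu : p - q' ≠ 0 := sub_ne_zero.2 fun h => hq' (h ▸ left_mem_segment ℝ p p')
    have hv : q' - p' ≠ 0 := sub_ne_zero.2 fun h => hq' (h ▸ right_mem_segment ℝ p p')
    have hsame := sameRay_of_sameRay_add_of_sameRay_sub (δ := q' - q) hu hv
      (sub_ne_zero.2 hne.symm) (by simpa using h₁.symm) (by simpa using h₂.symm)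
      (by simpa [focalSum] using heq)
    simpa using hsame.neg
  unfold focalSum at heq ⊢
  rw [hp, hp', norm_midpoint_eq_half_norm_add, norm_midpoint_eq_half_norm_add]
  rcases not_and_or.1 hray with h | h
  · have hlt := not_sameRay_iff_norm_add_lt.1 h
    have hle := norm_add_le (q - p') (q' - p')
    linarith
  · have hlt := not_sameRay_iff_norm_add_lt.1 h
    have hle := norm_add_le (p - q) (p - q')
    linarith

theorem Convex.eq_of_isMinOn_focalSum_frontier {D : Set E} {p p' q q' : E} (hD : Convex ℝ D)
    (hseg : segment ℝ p p' ∩ closure D = ∅) (hq : q ∈ frontier D) (hq' : q' ∈ frontier D)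
    (hmin : IsMinOn (focalSum p p') (frontier D) q)
    (hmin' : IsMinOn (focalSum p p') (frontier D) q') : q = q' := by
  by_contra hne
  have hp : p ∉ closure D := fun h => hseg.subset ⟨left_mem_segment ℝ p p', h⟩
  have hq'seg : q' ∉ segment ℝ p p' := fun h => hseg.subset ⟨h, frontier_subset_closure hq'⟩
  set m := midpoint ℝ q q'
  have hm : m ∈ closure D := hD.closure.segment_subset (frontier_subset_closure hq)
    (frontier_subset_closure hq') (midpoint_mem_segment q q')
  obtain ⟨w, hw, hwD⟩ := (convex_segment p m).isPreconnected.inter_frontier_nonempty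
    ⟨m, right_mem_segment ℝ p m, hm⟩ ⟨p, left_mem_segment ℝ p m, hp⟩
  have hqw := hmin (frontier_closure_subset hwD)
  have hwm := focalSum_le_of_mem_segment (p' := p') hw
  have hmq := focalSum_midpoint_lt hne (le_antisymm (hmin hq') (hmin' hq)) hq'seg
  exact (hqw.trans hwm).not_gt hmq

end FocalSum

theorem stmt15_general (D : Set (EuclideanSpace ℝ (Fin 3))) (p p' : EuclideanSpace ℝ (Fin 3))
    (hD : D.Nonempty) (hDb : Bornology.IsBounded D)
    (hDc : Convex ℝ D)
    (hseg : segment ℝ p p' ∩ closure D = ∅) :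
    ∃! q, q ∈ frontier D ∧
      ∀ x ∈ frontier D, ‖p - q‖ + ‖q - p'‖ ≤ ‖p - x‖ + ‖x - p'‖ := by
  have hp : p ∉ closure D := fun h => hseg.subset ⟨left_mem_segment ℝ p p', h⟩
  have hfr : (frontier D).Nonempty :=
    nonempty_frontier_iff.2 ⟨hD, fun h => hp (h ▸ subset_closure (mem_univ p))⟩
  have hfr_cpt : IsCompact (frontier D) :=
    hDb.isCompact_closure.of_isClosed_subset isClosed_frontier frontier_subset_closure
  obtain ⟨q, hq, hqmin⟩ := hfr_cpt.exists_isMinOn hfr (continuous_focalSum p p').continuousOn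
  exact ⟨q, ⟨hq, hqmin⟩, fun q' ⟨hq', hq'min⟩ =>
    (hDc.eq_of_isMinOn_focalSum_frontier hseg hq hq' hqmin hq'min).symm⟩

/-- For a nonempty bounded open convex `D ⊆ ℝ³` and `p, p' ∉ closure D` with
`[p,p'] ∩ closure D = ∅`, the first reflector (set of minimizers of
`x ↦ ‖p-x‖+‖x-p'‖` on `∂D`) consists of exactly one point. -/
theorem stmt15 (D : Set (EuclideanSpace ℝ (Fin 3))) (p p' : EuclideanSpace ℝ (Fin 3))
    (hD : D.Nonempty) (hDo : IsOpen D) (hDb : Bornology.IsBounded D)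
    (hDc : Convex ℝ D)
    (hp : p ∉ closure D) (hp' : p' ∉ closure D)
    (hseg : segment ℝ p p' ∩ closure D = ∅) :
    ∃! q, q ∈ frontier D ∧
      ∀ x ∈ frontier D, ‖p - q‖ + ‖q - p'‖ ≤ ‖p - x‖ + ‖x - p'‖ :=
  stmt15_general D p p' hD hDb hDc hseg
end

section
/- Let $D \subset \mathbb{R}^3$ be a nonempty bounded open set with $c = \min_{x\in\partial D}(|p-x|+|x-p'|) > |p-p'|$, where $p, p' \in \mathbb{R}^3 \setminus \overline{D}$. Let $q \in \Lambda_{\partial D}(p,p')$ (i.e., $q \in \partial D$ with $|p-q|+|q-p'| = c$), let $0 < s < \frac{1}{2}(c - |p-p'|)$, set $\mathbf{A}' = \frac{q - p'}{|q-p'|}$ and $p'' = p' + s\mathbf{A}'$. Then $\min_{x \in \partial D}(|p-x|+|x-p''|) = c - s$ and $\Lambda_{\partial D}(p, p'') = \{q\}$, i.e., $q$ is the unique minimizer of $x \mapsto |p-x|+|x-p''|$ on $\partial D$. -/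
/-- If `q` attains the minimum `c > ‖p-p'‖` of `x ↦ ‖p-x‖+‖x-p'‖` on `∂D`, and
`0 < s < (c-‖p-p'‖)/2`, then with `p'' = p' + s(q-p')/‖q-p'‖` the minimum of
`x ↦ ‖p-x‖+‖x-p''‖` on `∂D` equals `c - s` and `q` is its unique minimizer. -/
theorem stmt17 (D : Set (EuclideanSpace ℝ (Fin 3))) (p p' q : EuclideanSpace ℝ (Fin 3))
    (c s : ℝ)
    (hD : D.Nonempty) (hDo : IsOpen D) (hDb : Bornology.IsBounded D)
    (hp : p ∉ closure D) (hp' : p' ∉ closure D)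
    (hc : IsLeast {r : ℝ | ∃ x ∈ frontier D, r = ‖p - x‖ + ‖x - p'‖} c)
    (hcpp' : ‖p - p'‖ < c)
    (hq : q ∈ frontier D) (hqc : ‖p - q‖ + ‖q - p'‖ = c)
    (hs : 0 < s) (hss : s < (c - ‖p - p'‖) / 2) :
    IsLeast {r : ℝ | ∃ x ∈ frontier D,
        r = ‖p - x‖ + ‖x - (p' + (s / ‖q - p'‖) • (q - p'))‖} (c - s) ∧
    ∀ x ∈ frontier D,
      ‖p - x‖ + ‖x - (p' + (s / ‖q - p'‖) • (q - p'))‖ = c - s → x = q := by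
  set v := q - p' with hv
  set r := ‖q - p'‖ with hrdef
  set p'' := p' + (s / r) • v with hp''def
  have htri : ‖p - q‖ ≤ ‖p - p'‖ + r := by
    have h : ‖p - q‖ = ‖(p - p') + (p' - q)‖ := by rw [sub_add_sub_cancel]
    have h2 := norm_add_le (p - p') (p' - q)
    rw [norm_sub_rev p' q] at h2
    exact h ▸ h2
  have hsr : s < r := by linarith
  have hr : 0 < r := lt_trans hs hsr
  have hvne : v ≠ 0 := by
    show q - p' ≠ 0
    exact fun h => (ne_of_gt hr) (by rw [hrdef, h, norm_zero])
  have hnp'' : ‖p'' - p'‖ = s := by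
    have h : p'' - p' = (s / r) • v := by rw [hp''def]; abel
    rw [h, norm_smul, Real.norm_eq_abs, abs_of_pos (div_pos hs hr), ← hrdef,
      div_mul_cancel₀ _ (ne_of_gt hr)]
  have hqp'' : ‖q - p''‖ = r - s := by
    have h1 : q - p'' = (1 - s / r) • v := by
      rw [hp''def, sub_smul, one_smul, hv]; abel
    rw [h1, norm_smul, Real.norm_eq_abs,
      abs_of_pos (by rw [sub_pos]; exact (div_lt_one hr).mpr hsr), ← hrdef]
    field_simp
  have hp''ne : p'' - p' ≠ 0 := by
    intro h; rw [h, norm_zero] at hnp''; exact (ne_of_gt hs) hnp''.symm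
  have hmem : c - s ∈ {r : ℝ | ∃ x ∈ frontier D, r = ‖p - x‖ + ‖x - p''‖} := by
    exact ⟨q, hq, by rw [hqp'']; linarith⟩
  have hlb : ∀ y ∈ {r : ℝ | ∃ x ∈ frontier D, r = ‖p - x‖ + ‖x - p''‖}, c - s ≤ y := by
    rintro y ⟨x, hx, rfl⟩
    have h1 : c ≤ ‖p - x‖ + ‖x - p'‖ := hc.2 ⟨x, hx, rfl⟩
    have h2 : ‖x - p'‖ ≤ ‖x - p''‖ + ‖p'' - p'‖ := by
      have h := norm_add_le (x - p'') (p'' - p')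
      rw [sub_add_sub_cancel] at h
      exact h
    rw [hnp''] at h2
    linarith
  refine ⟨⟨hmem, hlb⟩, ?_⟩
  intro x hx hxe
  have h1 : c ≤ ‖p - x‖ + ‖x - p'‖ := hc.2 ⟨x, hx, rfl⟩
  have h2 : ‖x - p'‖ ≤ ‖x - p''‖ + s := by
    have h := norm_add_le (x - p'') (p'' - p')
    rw [sub_add_sub_cancel, hnp''] at h
    exact h
  have heq : ‖x - p'‖ = ‖x - p''‖ + ‖p'' - p'‖ := by rw [hnp'']; linarith
  have hce : ‖p - x‖ + ‖x - p'‖ = c := by rw [hnp''] at heq; linarith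
  have hray : SameRay ℝ (x - p'') (p'' - p') := by
    rw [sameRay_iff_norm_add, show x - p'' + (p'' - p') = x - p' by abel]
    exact heq
  obtain ⟨t, ht0, htx⟩ := hray.symm.exists_nonneg_left hp''ne
  have hp''p' : p'' - p' = (s / r) • v := by rw [hp''def]; abel
  set α : ℝ := (1 + t) * (s / r) with hα
  have hαpos : 0 < α := by positivity
  have hxv : x - p' = α • v := by
    have h0 : x - p' = t • (p'' - p') + (p'' - p') := by rw [htx]; abel
    rw [h0, hp''p', hα]; module
  have hxnorm : ‖x - p'‖ = α * r := by
    rw [hxv, norm_smul, Real.norm_eq_abs, abs_of_pos hαpos, hrdef]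
  have hpx : ‖p - x‖ = c - α * r := by rw [← hxnorm]; linarith
  have hpq : ‖p - q‖ = c - r := by linarith
  have hxval : x = p' + α • v := by rw [← hxv]; abel
  rcases lt_trichotomy α 1 with hα1 | hα1 | hα1
  · exfalso
    have hdec : p - x = (p - q) + (1 - α) • v := by rw [hxval, hv]; module
    have hray2 : SameRay ℝ (p - q) ((1 - α) • v) := by
      rw [sameRay_iff_norm_add, ← hdec, hpx, hpq, norm_smul, Real.norm_eq_abs,
        abs_of_pos (by linarith), ← hrdef]
      ring
    have hmid : SameRay ℝ ((1 - α) • v) v :=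
      (sameRay_smul_left_iff_of_ne hvne (by linarith : (1:ℝ) - α ≠ 0)).mpr (by linarith)
    have hray3 : SameRay ℝ (p - q) v :=
      hray2.trans hmid (fun h => (smul_ne_zero (by linarith : (1:ℝ) - α ≠ 0) hvne h).elim)
    have hfin : ‖p - p'‖ = ‖p - q‖ + ‖v‖ := by
      rw [show p - p' = (p - q) + v by rw [hv]; abel]
      exact hray3.norm_add
    rw [hpq, ← hrdef] at hfin
    linarith
  · have hxq : x - p' = q - p' := by rw [hxv, hα1, one_smul, hv]
    exact sub_left_inj.mp hxq
  · exfalso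
    have hdec : p - q = (p - x) + (α - 1) • v := by rw [hxval, hv]; module
    have hray2 : SameRay ℝ (p - x) ((α - 1) • v) := by
      rw [sameRay_iff_norm_add, ← hdec, hpx, hpq, norm_smul, Real.norm_eq_abs,
        abs_of_pos (by linarith), ← hrdef]
      ring
    have hmid : SameRay ℝ ((α - 1) • v) v :=
      (sameRay_smul_left_iff_of_ne hvne (by linarith : α - 1 ≠ 0)).mpr (by linarith)
    have hray3 : SameRay ℝ (p - x) v :=
      hray2.trans hmid (fun h => (smul_ne_zero (by linarith : α - 1 ≠ 0) hvne h).elim)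
    have hray4 : SameRay ℝ (p - x) (α • v) := hray3.nonneg_smul_right (le_of_lt hαpos)
    have hfin : ‖p - p'‖ = ‖p - x‖ + ‖α • v‖ := by
      rw [show p - p' = (p - x) + α • v by rw [← hxv]; abel]
      exact hray4.norm_add
    rw [hpx, norm_smul, Real.norm_eq_abs, abs_of_pos hαpos, ← hrdef] at hfin
    linarith
end
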